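/- (Closed form of the gyro-inverse in the Lorentz model.) Let c>0 and let x = (x_t, x_s) be a point on the forward hyperboloid 𝕃^n_{-c} with x_s ≠ 0. Then the logarithmic map at the pole satisfies Log_ō(x) = (0, (arcosh(√c·x_t)/(√c·‖x_s‖))·x_s), and applying the exponential map at the pole to its negation recovers the spatial reflection of x: Exp_ō(−Log_ō(x)) = (x_t, −x_s). In particular the gyro-inverse ⊖x = Exp_ō(−Log_ō(x)) equals (x_t, −x_s). -/

import Mathlib

open scoped RealInnerProductSpace Classical

/-- The inverse hyperbolic cosine on `ℝ`: `arcosh x = log (x + √(x² - 1))`. -/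
noncomputable def Real.arcosh' (x : ℝ) : ℝ := Real.log (x + Real.sqrt (x ^ 2 - 1))

/-- The Minkowski inner product on `ℝ × ℝ^n`. -/
noncomputable def mink {n : ℕ} (x y : ℝ × EuclideanSpace ℝ (Fin n)) : ℝ :=
  -(x.1 * y.1) + ⟪x.2, y.2⟫

/-- The pole `ō = (1/√c, 0)` of the forward hyperboloid `𝕃^n_{-c}`. -/
noncomputable def pole (c : ℝ) (n : ℕ) : ℝ × EuclideanSpace ℝ (Fin n) :=
  (1 / Real.sqrt c, 0)

/-- The exponential map of `𝕃^n_{-c}` at the pole, applied to a tangent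
vector `z = (0, z_s)`:  `Exp_ō(z) = ((1/√c)·cosh(√c‖z_s‖),
(1/√c)·sinh(√c‖z_s‖)·z_s/‖z_s‖)` for `z_s ≠ 0`, and `Exp_ō(0) = ō`. -/
noncomputable def Expo (c : ℝ) {n : ℕ} (z : ℝ × EuclideanSpace ℝ (Fin n)) :
    ℝ × EuclideanSpace ℝ (Fin n) :=
  if z.2 = 0 then pole c n
  else ((1 / Real.sqrt c) * Real.cosh (Real.sqrt c * ‖z.2‖),
        ((1 / Real.sqrt c) * Real.sinh (Real.sqrt c * ‖z.2‖) / ‖z.2‖) • z.2)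

/-- The logarithmic map of `𝕃^n_{-c}` at the pole:
`Log_ō(x) = (arcosh β / √(β²-1))·(x - β·ō)` with `β = -c·⟨ō,x⟩_L` for
`x ≠ ō`, and `Log_ō(ō) = 0`. -/
noncomputable def Logo (c : ℝ) {n : ℕ} (x : ℝ × EuclideanSpace ℝ (Fin n)) :
    ℝ × EuclideanSpace ℝ (Fin n) :=
  if x = pole c n then 0
  else (Real.arcosh' (-c * mink (pole c n) x) /
          Real.sqrt ((-c * mink (pole c n) x) ^ 2 - 1)) •
        (x - (-c * mink (pole c n) x) • pole c n)

/-!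
On `𝕃^n_{-c}` one has `β = -c⟨ō,x⟩_L = √c·x_t` and `β² - 1 = c‖x_s‖²`, which turns the definition
of `Log_ō` into the closed form. That closed form shows that `Log_ō` commutes with the reflection
`(x_t, x_s) ↦ (x_t, -x_s)`, an isometry of the hyperboloid, so
`Exp_ō(-Log_ō x) = Exp_ō(Log_ō(x_t, -x_s)) = (x_t, -x_s)`, the last step because `cosh ∘ arcosh`
and `sinh ∘ arcosh` undo the closed form of `Log_ō`.
-/

open Real

theorem Real.arcosh'_eq_arcosh (t : ℝ) : Real.arcosh' t = Real.arcosh t := rfl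

section LorentzModel

variable {c : ℝ} {n : ℕ}

theorem mink_neg_snd (x y : ℝ × EuclideanSpace ℝ (Fin n)) :
    mink (x.1, -x.2) (y.1, -y.2) = mink x y := by
  simp only [mink, inner_neg_neg]

theorem neg_mul_mink_pole (x : ℝ × EuclideanSpace ℝ (Fin n)) :
    -c * mink (pole c n) x = √c * x.1 := by
  simp only [mink, pole, inner_zero_left, add_zero]
  rw [neg_mul_neg, ← mul_assoc, mul_one_div, div_sqrt]

theorem sub_smul_pole (hc : 0 < c) (x : ℝ × EuclideanSpace ℝ (Fin n)) :
    x - (√c * x.1) • pole c n = (0, x.2) := by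
  have hs : √c ≠ 0 := (sqrt_pos.2 hc).ne'
  ext : 1
  · simp only [pole, Prod.fst_sub, Prod.smul_fst, smul_eq_mul]
    field_simp
    ring
  · simp [pole]

variable {x : ℝ × EuclideanSpace ℝ (Fin n)}

theorem sq_sqrt_mul_fst_sub_one (hc : 0 < c) (hx : mink x x = -(1 / c)) :
    (√c * x.1) ^ 2 - 1 = (√c * ‖x.2‖) ^ 2 := by
  rw [mink, real_inner_self_eq_norm_sq] at hx
  rw [mul_pow, mul_pow, sq_sqrt hc.le]
  field_simp at hx ⊢
  nlinarith

theorem sqrt_sq_sqrt_mul_fst_sub_one (hc : 0 < c) (hx : mink x x = -(1 / c)) :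
    √((√c * x.1) ^ 2 - 1) = √c * ‖x.2‖ := by
  rw [sq_sqrt_mul_fst_sub_one hc hx, sqrt_sq (by positivity)]

theorem one_lt_sqrt_mul_fst (hc : 0 < c) (hx : mink x x = -(1 / c)) (hx0 : 0 < x.1)
    (hxs : x.2 ≠ 0) : 1 < √c * x.1 := by
  have hsq := sq_sqrt_mul_fst_sub_one hc hx
  have hpos : 0 < √c * ‖x.2‖ := mul_pos (sqrt_pos.2 hc) (norm_pos_iff.2 hxs)
  have hβ : 0 < √c * x.1 := mul_pos (sqrt_pos.2 hc) hx0
  nlinarith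

theorem Logo_eq (hc : 0 < c) (hx : mink x x = -(1 / c)) (hxs : x.2 ≠ 0) :
    Logo c x = (0, (Real.arcosh' (√c * x.1) / (√c * ‖x.2‖)) • x.2) := by
  have hxo : x ≠ pole c n := fun h => hxs (by rw [h]; rfl)
  rw [Logo, if_neg hxo, neg_mul_mink_pole, sqrt_sq_sqrt_mul_fst_sub_one hc hx,
    sub_smul_pole hc, Prod.smul_mk, smul_zero]

theorem Logo_neg_snd (hc : 0 < c) (hx : mink x x = -(1 / c)) (hxs : x.2 ≠ 0) :
    Logo c (x.1, -x.2) = -Logo c x := by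
  rw [Logo_eq hc (by rwa [mink_neg_snd]) (neg_ne_zero.2 hxs), Logo_eq hc hx hxs]
  simp only [norm_neg, smul_neg, Prod.neg_mk, neg_zero]

theorem Expo_Logo (hc : 0 < c) (hx : mink x x = -(1 / c)) (hx0 : 0 < x.1) (hxs : x.2 ≠ 0) :
    Expo c (Logo c x) = x := by
  have hβ := one_lt_sqrt_mul_fst hc hx hx0 hxs
  have hs : 0 < √c := sqrt_pos.2 hc
  have hr : 0 < ‖x.2‖ := norm_pos_iff.2 hxs
  set A := arcosh (√c * x.1)
  have hA : 0 < A := arcosh_pos hβ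
  set a := A / (√c * ‖x.2‖) with a_def
  have ha : 0 < a := by positivity
  have hnorm : ‖a • x.2‖ = A / √c := by
    rw [norm_smul, norm_of_nonneg ha.le, a_def]
    field_simp
  rw [Logo_eq hc hx hxs, Real.arcosh'_eq_arcosh, Expo, if_neg (smul_ne_zero ha.ne' hxs), hnorm,
    mul_div_cancel₀ _ hs.ne', cosh_arcosh hβ.le, sinh_arcosh hβ.le,
    sqrt_sq_sqrt_mul_fst_sub_one hc hx, smul_smul]
  ext : 1
  · field_simp
  · have hscalar : 1 / √c * (√c * ‖x.2‖) / (A / √c) * a = 1 := by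
      rw [a_def]
      field_simp
    rw [hscalar, one_smul]

end LorentzModel

/-- **Closed form of the gyro-inverse in the Lorentz model.**
Let `c > 0` and let `x = (x_t, x_s) ∈ 𝕃^n_{-c}` with `x_s ≠ 0`.  Then
`Log_ō(x) = (0, (arcosh(√c·x_t)/(√c·‖x_s‖))·x_s)` and
`Exp_ō(-Log_ō(x)) = (x_t, -x_s)`; in particular the gyro-inverse
`⊖x = Exp_ō(-Log_ō(x))` equals `(x_t, -x_s)`. -/
theorem gyro_inverse_closed_form (c : ℝ) (hc : 0 < c) (n : ℕ)
    (x : ℝ × EuclideanSpace ℝ (Fin n))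
    (hx : mink x x = -(1 / c)) (hx0 : 0 < x.1) (hxs : x.2 ≠ 0) :
    Logo c x = (0, (Real.arcosh' (Real.sqrt c * x.1) /
        (Real.sqrt c * ‖x.2‖)) • x.2) ∧
      Expo c (-(Logo c x)) = (x.1, -x.2) := by
  refine ⟨Logo_eq hc hx hxs, ?_⟩
  rw [← Logo_neg_snd hc hx hxs]
  exact Expo_Logo hc (by rwa [mink_neg_snd]) hx0 (neg_ne_zero.2 hxs)
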